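/- For every natural number n ≥ 1, π(n²+2n) - π(n²) ≤ π(2n) - π(n) + 1 + ∑_{d squarefree, d>1, ω(d) even, prime factors ≤ n} ⌊((n² mod d)+(2n mod d))/d⌋, where ω(d) is the number of (distinct) prime factors of d and π the prime-counting function. -/

import Mathlib

open ArithmeticFunction Nat Finset

/-- Index set: squarefree `d > 1` all of whose prime factors are `≤ n`. -/
def sqfSet (n : ℕ) : Finset ℕ :=
  (Finset.range (primorial n + 1)).filter
    (fun d => 1 < d ∧ Squarefree d ∧ ∀ p ∈ d.primeFactors, p ≤ n)

/-- The transformed Legendre function `φ_T`. -/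
def phiT (M₁ M₂ n : ℕ) : ℤ :=
  -∑ d ∈ sqfSet n, ArithmeticFunction.moebius d * (((M₁ % d + M₂ % d) / d : ℕ) : ℤ)

/-! With `Φ(x)` the number of `m ∈ [1, x]` coprime to `n#` (Legendre's `φ(x, n)`), Legendre's
formula `Φ(x) = ∑_{d ∣ n#} μ(d) ⌊x/d⌋` and `⌊(a+b)/d⌋ = ⌊a/d⌋ + ⌊b/d⌋ + ⌊(a mod d + b mod d)/d⌋`
give `Φ(a+b) = Φ(a) + Φ(b) - φ_T(a, b, n)`. Take `a = n²`, `b = 2n`: every prime in `(n², n²+2n]`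
is counted by `Φ(n²+2n) - Φ(n²)`, and since `2n < (n+1)²` the integers counted by `Φ(2n)` are `1`
and the primes in `(n, 2n]`. Finally `-φ_T = ∑ μ(d) ⌊…⌋` is at most its part with `μ(d) = 1`. -/

open scoped ArithmeticFunction.Moebius Nat.Prime

def legendrePhi (x n : ℕ) : ℕ := #{m ∈ Ioc 0 x | m.Coprime (primorial n)}

theorem Nat.Prime.coprime_primorial_iff {p n : ℕ} (hp : p.Prime) :
    p.Coprime (primorial n) ↔ n < p := by
  rw [hp.coprime_iff_not_dvd, hp.dvd_primorial_iff, not_le]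

theorem lt_of_prime_dvd_of_coprime_primorial {m n p : ℕ} (hp : p.Prime) (hpm : p ∣ m)
    (hm : m.Coprime (primorial n)) : n < p :=
  hp.coprime_primorial_iff.mp (hm.coprime_dvd_left hpm)

theorem prime_of_coprime_primorial {m n : ℕ} (hm : m.Coprime (primorial n)) (h1 : 1 < m)
    (hlt : m < (n + 1) ^ 2) : m.Prime := by
  by_contra hnp
  have hq := lt_of_prime_dvd_of_coprime_primorial (minFac_prime h1.ne') (minFac_dvd m) hm
  have := minFac_sq_le_self (by omega) hnp
  have := Nat.pow_le_pow_left (show n + 1 ≤ m.minFac from hq) 2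
  omega

theorem squarefree_and_primeFactors_le_iff_dvd_primorial {d n : ℕ} :
    (Squarefree d ∧ ∀ p ∈ d.primeFactors, p ≤ n) ↔ d ∣ primorial n := by
  constructor
  · rintro ⟨hsq, hle⟩
    rw [← prod_primeFactors_of_squarefree hsq, prod_primeFactors_dvd_iff (primorial_ne_zero n),
      primeFactors_primorial]
    exact fun p hp => mem_primesLE.mpr ⟨hle p hp, prime_of_mem_primeFactors hp⟩
  · intro h
    exact ⟨(squarefree_primorial n).squarefree_of_dvd h, fun p hp =>
      (prime_of_mem_primeFactors hp).dvd_primorial_iff.mp ((dvd_of_mem_primeFactors hp).trans h)⟩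

theorem sqfSet_eq_divisors_primorial_erase_one (n : ℕ) :
    sqfSet n = (primorial n).divisors.erase 1 := by
  ext d
  simp only [sqfSet, mem_filter, mem_range, mem_erase, mem_divisors, Nat.lt_succ_iff,
    squarefree_and_primeFactors_le_iff_dvd_primorial]
  constructor
  · rintro ⟨-, h1, hd⟩
    exact ⟨by omega, hd, primorial_ne_zero n⟩
  · rintro ⟨h1, hd, hP⟩
    have : d ≠ 0 := by rintro rfl; exact hP (zero_dvd_iff.mp hd)
    exact ⟨le_of_dvd (primorial_pos n) hd, by omega, hd⟩

theorem sum_moebius_divisors (k : ℕ) :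
    ∑ d ∈ k.divisors, (μ d : ℤ) = if k = 1 then 1 else 0 := by
  rw [← coe_mul_zeta_apply, moebius_mul_coe_zeta, one_apply]

theorem legendrePhi_eq_sum_moebius (x n : ℕ) :
    (legendrePhi x n : ℤ) = ∑ d ∈ (primorial n).divisors, μ d * ((x / d : ℕ) : ℤ) := by
  calc (legendrePhi x n : ℤ)
      = ∑ m ∈ Ioc 0 x, ∑ d ∈ (primorial n).divisors, if d ∣ m then (μ d : ℤ) else 0 := by
        rw [legendrePhi, card_filter]
        push_cast
        refine sum_congr rfl fun m _ => ?_
        have hgcd :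
            {d ∈ (primorial n).divisors | d ∣ m} = (Nat.gcd (primorial n) m).divisors := by
          rw [← divisors_filter_dvd_of_dvd (primorial_ne_zero n) (Nat.gcd_dvd_left _ m)]
          exact filter_congr fun d hd => by
            rw [Nat.dvd_gcd_iff, and_iff_right (dvd_of_mem_divisors hd)]
        rw [← sum_filter, hgcd, sum_moebius_divisors]
        simp only [Nat.coprime_comm, Nat.Coprime]
    _ = ∑ d ∈ (primorial n).divisors, μ d * ((x / d : ℕ) : ℤ) := by
        rw [sum_comm]
        refine sum_congr rfl fun d _ => ?_
        rw [← Ioc_filter_dvd_card_eq_div, ← sum_filter, sum_const, nsmul_eq_mul, mul_comm]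

theorem add_div_eq_div_add_div_add_mod_add_mod_div (a b c : ℕ) :
    (a + b) / c = a / c + b / c + (a % c + b % c) / c := by
  rcases eq_or_ne c 0 with rfl | hc
  · simp
  have : a + b = (a % c + b % c) + c * (a / c + b / c) := by
    have := mod_add_div a c; have := mod_add_div b c; rw [mul_add]; omega
  rw [this, add_mul_div_left _ _ (pos_of_ne_zero hc)]
  ring

theorem legendrePhi_add (x y n : ℕ) :
    (legendrePhi (x + y) n : ℤ) = legendrePhi x n + legendrePhi y n - phiT x y n := by
  rw [legendrePhi_eq_sum_moebius, legendrePhi_eq_sum_moebius, legendrePhi_eq_sum_moebius, phiT,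
    sub_neg_eq_add, sqfSet_eq_divisors_primorial_erase_one, sum_erase _ (by simp),
    ← sum_add_distrib, ← sum_add_distrib]
  refine sum_congr rfl fun d _ => ?_
  rw [add_div_eq_div_add_div_add_mod_add_mod_div]
  push_cast
  ring

theorem card_filter_Ioc_zero_eq_add (p : ℕ → Prop) [DecidablePred p] {a b : ℕ} (h : a ≤ b) :
    #{m ∈ Ioc 0 b | p m} = #{m ∈ Ioc 0 a | p m} + #{m ∈ Ioc a b | p m} := by
  rw [← Ioc_union_Ioc_eq_Ioc (Nat.zero_le a) h, filter_union,
    card_union_of_disjoint (disjoint_filter_filter (Ioc_disjoint_Ioc_of_le le_rfl))]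

theorem primeCounting_eq_add_card_filter_prime_Ioc {a b : ℕ} (h : a ≤ b) :
    π b = π a + #{p ∈ Ioc a b | p.Prime} := by
  simp only [← primesLE_card_eq_primeCounting, primesLE_eq_filter_Ioc_zero]
  exact card_filter_Ioc_zero_eq_add _ h

theorem primeCounting_add_legendrePhi_le {n a b : ℕ} (hna : n ≤ a) (hab : a ≤ b) :
    π b + legendrePhi a n ≤ π a + legendrePhi b n := by
  have hsub : {p ∈ Ioc a b | p.Prime} ⊆ {m ∈ Ioc a b | m.Coprime (primorial n)} := by
    intro p hp
    rw [mem_filter, mem_Ioc] at hp ⊢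
    exact ⟨hp.1, hp.2.coprime_primorial_iff.mpr (by omega)⟩
  rw [primeCounting_eq_add_card_filter_prime_Ioc hab, legendrePhi, legendrePhi,
    card_filter_Ioc_zero_eq_add _ hab]
  have := card_le_card hsub
  omega

theorem legendrePhi_le_card_filter_prime_Ioc_add_one {x n : ℕ} (hx : x < (n + 1) ^ 2) :
    legendrePhi x n ≤ #{p ∈ Ioc n x | p.Prime} + 1 := by
  refine (card_le_card fun m hm => ?_).trans (card_insert_le 1 _)
  rw [mem_filter, mem_Ioc] at hm
  obtain ⟨⟨hm0, hmx⟩, hcop⟩ := hm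
  rcases eq_or_ne m 1 with rfl | hm1
  · exact mem_insert_self 1 _
  have hp := prime_of_coprime_primorial hcop (by omega) (by omega)
  exact mem_insert_of_mem (mem_filter.mpr ⟨mem_Ioc.mpr
    ⟨lt_of_prime_dvd_of_coprime_primorial hp dvd_rfl hcop, hmx⟩, hp⟩)

theorem legendrePhi_add_primeCounting_le {x n : ℕ} (hnx : n ≤ x) (hx : x < (n + 1) ^ 2) :
    legendrePhi x n + π n ≤ π x + 1 := by
  have := legendrePhi_le_card_filter_prime_Ioc_add_one hx
  rw [primeCounting_eq_add_card_filter_prime_Ioc hnx]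
  omega

theorem neg_phiT_le_sum_filter_even (M₁ M₂ n : ℕ) :
    -phiT M₁ M₂ n ≤ ∑ d ∈ (sqfSet n).filter (fun d => Even d.primeFactors.card),
      (((M₁ % d + M₂ % d) / d : ℕ) : ℤ) := by
  rw [phiT, neg_neg, sum_filter]
  refine sum_le_sum fun d hd => ?_
  have hsq : Squarefree d := (mem_filter.mp hd).2.2.1
  have hμ : μ d = (-1) ^ #d.primeFactors := by
    rw [moebius_apply_of_squarefree hsq,
      ← (cardDistinctFactors_eq_cardFactors_iff_squarefree hsq.ne_zero).mpr hsq,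
      cardDistinctFactors_apply, ← List.card_toFinset, toFinset_factors]
  rw [hμ]
  split_ifs with heven
  · rw [heven.neg_one_pow, one_mul]
  · rw [(not_even_iff_odd.mp heven).neg_one_pow, neg_one_mul, neg_nonpos]
    positivity

theorem stmt_19_general (n : ℕ) :
    (Nat.primeCounting (n ^ 2 + 2 * n) : ℤ) - Nat.primeCounting (n ^ 2) ≤
      (Nat.primeCounting (2 * n) : ℤ) - Nat.primeCounting n + 1 +
        ∑ d ∈ (sqfSet n).filter (fun d => Even d.primeFactors.card),
          (((n ^ 2 % d + 2 * n % d) / d : ℕ) : ℤ) := by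
  have hsplit := legendrePhi_add (n ^ 2) (2 * n) n
  have hprimes := primeCounting_add_legendrePhi_le (n := n) (Nat.le_self_pow two_ne_zero n)
    (Nat.le_add_right (n ^ 2) (2 * n))
  have hsmall := legendrePhi_add_primeCounting_le (x := 2 * n) (n := n) (by omega) (by nlinarith)
  have heven := neg_phiT_le_sum_filter_even (n ^ 2) (2 * n) n
  zify at hprimes hsmall
  linarith

theorem stmt_19 (n : ℕ) (hn : 1 ≤ n) :
    (Nat.primeCounting (n ^ 2 + 2 * n) : ℤ) - Nat.primeCounting (n ^ 2) ≤
      (Nat.primeCounting (2 * n) : ℤ) - Nat.primeCounting n + 1 +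
        ∑ d ∈ (sqfSet n).filter (fun d => Even d.primeFactors.card),
          (((n ^ 2 % d + 2 * n % d) / d : ℕ) : ℤ) :=
  stmt_19_general n
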